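/- Let K̂̂ denote the switching policy (S−N, S−N+1, …, S−1, S). Then for every switching policy K one has W_q(K) ≤ W_q(K̂̂), F(K̂̂) ≤ F(K), and B(K) ≤ B(K̂̂); that is, K̂̂ yields the largest possible expected waiting time and expected back-room staffing and the smallest possible expected front-room staffing among all policies. In particular, for a given real B_l, if B(K̂̂) < B_l then there exists no switching policy K with B(K) ≥ B_l. -/

import Mathlib

open Finset

/-- A switching policy: `k 0 ≥ 0`, `k i - k (i-1) ≥ 1` for `1 ≤ i ≤ N`, and `k N = S`. -/
def IsPolicy (N : ℕ) (S : ℤ) (k : ℕ → ℤ) : Prop :=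
  0 ≤ k 0 ∧ (∀ i : ℕ, 1 ≤ i → i ≤ N → 1 ≤ k i - k (i - 1)) ∧ k N = S

/-- `X_i = ∏_{g=1}^{i-1} (1/g)^(k_g - k_{g-1})`. -/
noncomputable def Xcoef (k : ℕ → ℤ) (i : ℕ) : ℝ :=
  ∏ g ∈ Finset.Icc 1 (i - 1), ((1 : ℝ) / (g : ℝ)) ^ (k g - k (g - 1))

/-- `β (k 0) = 1` and, for `1 ≤ i ≤ N` and `k (i-1) + 1 ≤ j ≤ k i`,
`β j = (λ/μ)^(j - k 0) * (1/i)^(j - k (i-1)) * X_i`. -/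
def IsBeta (lam mu : ℝ) (N : ℕ) (k : ℕ → ℤ) (β : ℤ → ℝ) : Prop :=
  β (k 0) = 1 ∧
  ∀ i : ℕ, 1 ≤ i → i ≤ N → ∀ j : ℤ, k (i - 1) + 1 ≤ j → j ≤ k i →
    β j = (lam / mu) ^ (j - k 0) * ((1 : ℝ) / (i : ℝ)) ^ (j - k (i - 1)) * Xcoef k i

/-- Steady-state probabilities `P j = β j / Σ_{m=k 0}^{S} β m`. -/
noncomputable def Pfun (S : ℤ) (k : ℕ → ℤ) (β : ℤ → ℝ) (j : ℤ) : ℝ :=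
  β j / ∑ m ∈ Finset.Icc (k 0) S, β m

/-- Expected number of front-room workers. -/
noncomputable def Fval (N : ℕ) (S : ℤ) (k : ℕ → ℤ) (β : ℤ → ℝ) : ℝ :=
  ∑ i ∈ Finset.Icc 1 N, ∑ j ∈ Finset.Icc (k (i - 1) + 1) (k i), (i : ℝ) * Pfun S k β j

/-- Expected number of back-room workers. -/
noncomputable def Bval (N : ℕ) (S : ℤ) (k : ℕ → ℤ) (β : ℤ → ℝ) : ℝ :=
  (N : ℝ) - Fval N S k β

/-- Expected number of customers in the front room. -/
noncomputable def Lval (S : ℤ) (k : ℕ → ℤ) (β : ℤ → ℝ) : ℝ :=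
  ∑ j ∈ Finset.Icc (k 0) S, (j : ℝ) * Pfun S k β j

/-- Expected waiting time `W_q = L / (λ (1 - P S)) - 1/μ`. -/
noncomputable def Wq (lam mu : ℝ) (S : ℤ) (k : ℕ → ℤ) (β : ℤ → ℝ) : ℝ :=
  Lval S k β / (lam * (1 - Pfun S k β S)) - 1 / mu

/-- The policy `K̂̂ = (S-N, S-N+1, …, S-1, S)`. -/
def khathat (N : ℕ) (S : ℤ) : ℕ → ℤ := fun i => S - N + i

/-!
Both policies give birth–death chains with birth rate `λ` and death rate `i μ` on the `i`-th
block of levels, so `i β j = (λ/μ) β (j - 1)`. Under `K̂̂` the number of front-room workers at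
level `j` is `j - (S - N)`, the least any policy allows, hence `β̂ j / β j` increases in `j` on
the support of `β̂`. By a weighted Chebyshev inequality this likelihood-ratio order gives
`E[φ] ≤ Ê[φ]` for every monotone `φ`, in particular `L ≤ L̂` and `P(S) ≤ P̂(S)`. Rate balance
gives `F = (λ/μ)(1 - P(S))`, and the comparisons of `F`, `B` and `W_q` follow.
-/

theorem sum_mul_sum_le_of_ratio_le {ι : Type*} [LinearOrder ι] (A : Finset ι) {φ f g : ι → ℝ} (hφ : MonotoneOn φ A)
    (h : ∀ m ∈ A, ∀ m' ∈ A, m < m' → g m * f m' ≤ f m * g m') :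
    (∑ m ∈ A, φ m * f m) * ∑ m ∈ A, g m ≤ (∑ m ∈ A, φ m * g m) * ∑ m ∈ A, f m := by
  set D : ι → ι → ℝ := fun m m' => g m * f m' - f m * g m'
  have hdiff : (∑ m ∈ A, φ m * g m) * ∑ m ∈ A, f m - (∑ m ∈ A, φ m * f m) * ∑ m ∈ A, g m
      = ∑ m ∈ A, ∑ m' ∈ A, φ m * D m m' := by
    simp only [D, sum_mul_sum, ← sum_sub_distrib, mul_sub, mul_assoc]
  -- `D` is antisymmetric, so the double sum is half of one whose terms are all nonnegative
  have hswap : ∑ m ∈ A, ∑ m' ∈ A, φ m' * D m m' = -∑ m ∈ A, ∑ m' ∈ A, φ m * D m m' := by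
    rw [sum_comm]
    simp only [D, ← sum_neg_distrib]
    exact sum_congr rfl fun _ _ => sum_congr rfl fun _ _ => by ring
  have hterm : ∀ m ∈ A, ∀ m' ∈ A, 0 ≤ (φ m - φ m') * D m m' := by
    intro m hm m' hm'
    rcases lt_trichotomy m m' with hlt | rfl | hgt
    · exact mul_nonneg_of_nonpos_of_nonpos (sub_nonpos.2 (hφ hm hm' hlt.le))
        (sub_nonpos.2 (h m hm m' hm' hlt))
    · simp [D]
    · exact mul_nonneg (sub_nonneg.2 (hφ hm' hm hgt.le)) (by linarith [h m' hm' m hm hgt])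
  have hsym : 0 ≤ ∑ m ∈ A, ∑ m' ∈ A, (φ m - φ m') * D m m' :=
    sum_nonneg fun m hm => sum_nonneg fun m' hm' => hterm m hm m' hm'
  simp only [sub_mul, sum_sub_distrib, hswap] at hsym
  linarith

theorem mul_le_mul_of_ratio_step {a b : ℤ → ℝ} {m m' : ℤ} (hmm' : m ≤ m')
    (hb : ∀ j ∈ Icc m m', 0 < b j)
    (hstep : ∀ j ∈ Ioc m m', a (j - 1) * b j ≤ a j * b (j - 1)) :
    a m * b m' ≤ a m' * b m := by
  induction m', hmm' using Int.leInduction with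
  | base => exact le_rfl
  | succ n hmn ih =>
    have ih := ih (fun j hj => hb j (by simp at hj ⊢; omega))
      (fun j hj => hstep j (by simp at hj ⊢; omega))
    have hs := hstep (n + 1) (by simp; omega)
    rw [add_sub_cancel_right] at hs
    have hbm := hb m (by simp; omega)
    have hbn := hb n (by simp; omega)
    have hbn1 := hb (n + 1) (by simp; omega)
    refine le_of_mul_le_mul_right ?_ hbn
    calc a m * b (n + 1) * b n = a m * b n * b (n + 1) := by ring
      _ ≤ a n * b m * b (n + 1) := mul_le_mul_of_nonneg_right ih hbn1.le
      _ = a n * b (n + 1) * b m := by ring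
      _ ≤ a (n + 1) * b n * b m := mul_le_mul_of_nonneg_right hs hbm.le
      _ = a (n + 1) * b m * b n := by ring

theorem sum_Ioc_sub_one {M : Type*} [AddCommMonoid M] (f : ℤ → M) (a b : ℤ) :
    ∑ j ∈ Ioc a b, f (j - 1) = ∑ j ∈ Ico a b, f j := by
  rw [← Ico_add_one_add_one_eq_Ioc, ← sum_Ico_add']
  simp

theorem sum_Icc_ite_top_mul (p : ℤ → ℝ) {a b : ℤ} (hab : a ≤ b) :
    ∑ j ∈ Icc a b, (if b ≤ j then 1 else 0) * p j = p b := by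
  rw [sum_eq_single_of_mem b (mem_Icc.2 ⟨hab, le_rfl⟩) fun j hj hjb => ?_]
  · simp
  · rw [mem_Icc] at hj
    simp [show ¬b ≤ j by omega]

theorem khathat_isPolicy {N : ℕ} {S : ℤ} (hS : (N : ℤ) ≤ S) : IsPolicy N S (khathat N S) :=
  ⟨by simp [khathat]; omega, fun i hi _ => by simp [khathat]; omega, by simp [khathat]⟩

namespace IsPolicy

variable {N : ℕ} {S : ℤ} {k : ℕ → ℤ}

theorem sub_le_sub (hk : IsPolicy N S k) {i i' : ℕ} (hii' : i ≤ i') (hi' : i' ≤ N) :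
    (i' : ℤ) - i ≤ k i' - k i := by
  induction i', hii' using Nat.le_induction with
  | base => simp
  | succ n hin ih =>
    have hstep := hk.2.1 (n + 1) (by omega) hi'
    rw [add_tsub_cancel_right] at hstep
    have := ih (by omega)
    push_cast
    omega

theorem le_khathat (hk : IsPolicy N S k) {i : ℕ} (hi : i ≤ N) : k i ≤ khathat N S i := by
  have := hk.sub_le_sub hi le_rfl
  rw [hk.2.2] at this
  simp only [khathat]
  omega

theorem exists_block (hk : IsPolicy N S k) {j : ℤ} (h0 : k 0 < j) (hS : j ≤ S) :
    ∃ t, 1 ≤ t ∧ t ≤ N ∧ k (t - 1) < j ∧ j ≤ k t := by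
  classical
  have hex : ∃ t, j ≤ k t := ⟨N, hk.2.2 ▸ hS⟩
  have hjt := Nat.find_spec hex
  have ht0 : Nat.find hex ≠ 0 := fun h => by rw [h] at hjt; omega
  refine ⟨Nat.find hex, by omega, Nat.find_min' hex (hk.2.2 ▸ hS), ?_, hjt⟩
  by_contra hle
  exact Nat.find_min hex (by omega : Nat.find hex - 1 < Nat.find hex) (by omega)

theorem sum_blocks {M : Type*} [AddCommMonoid M] (hk : IsPolicy N S k) (g : ℤ → M) :
    ∑ i ∈ Icc 1 N, ∑ j ∈ Icc (k (i - 1) + 1) (k i), g j = ∑ j ∈ Ioc (k 0) S, g j := by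
  suffices ∀ n ≤ N, ∑ i ∈ Icc 1 n, ∑ j ∈ Icc (k (i - 1) + 1) (k i), g j
      = ∑ j ∈ Ioc (k 0) (k n), g j by rw [this N le_rfl, hk.2.2]
  intro n hn
  induction n with
  | zero => simp
  | succ n ih =>
    have h0n := hk.sub_le_sub (Nat.zero_le n) (by omega)
    have hn1 := hk.sub_le_sub (Nat.le_add_right n 1) hn
    rw [sum_Icc_succ_top (by omega), ih (by omega), add_tsub_cancel_right,
      Icc_add_one_left_eq_Ioc, ← sum_union (Ioc_disjoint_Ioc_of_le le_rfl),
      Ioc_union_Ioc_eq_Ioc (by omega) (by push_cast at hn1; omega)]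

end IsPolicy

theorem Xcoef_pos (k : ℕ → ℤ) (i : ℕ) : 0 < Xcoef k i :=
  prod_pos fun _ hg => zpow_pos (one_div_pos.2 (Nat.cast_pos.2 (mem_Icc.1 hg).1)) _

theorem Xcoef_succ (k : ℕ → ℤ) (i : ℕ) :
    Xcoef k (i + 1) = Xcoef k i * (1 / (i : ℝ)) ^ (k i - k (i - 1)) := by
  cases i with
  | zero => simp [Xcoef]
  | succ i =>
    simp only [Xcoef, add_tsub_cancel_right]
    rw [prod_Icc_succ_top (by omega)]
    simp

namespace IsBeta

variable {lam mu : ℝ} {N : ℕ} {S : ℤ} {k : ℕ → ℤ} {β : ℤ → ℝ}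

theorem eq_of_mem_block (hk : IsPolicy N S k) (hβ : IsBeta lam mu N k β) {i : ℕ}
    (hi : 1 ≤ i) (hiN : i ≤ N) {j : ℤ} (hlo : k (i - 1) ≤ j) (hhi : j ≤ k i) :
    β j = (lam / mu) ^ (j - k 0) * (1 / (i : ℝ)) ^ (j - k (i - 1)) * Xcoef k i := by
  rcases hlo.lt_or_eq with hlt | rfl
  · exact hβ.2 i hi hiN j hlt hhi
  obtain ⟨i, rfl⟩ : ∃ i', i = i' + 1 := ⟨i - 1, by omega⟩
  rw [add_tsub_cancel_right, sub_self, zpow_zero, mul_one]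
  cases i with
  | zero => simp [hβ.1, Xcoef]
  | succ i =>
    have hstep := hk.2.1 (i + 1) (by omega) (by omega)
    rw [hβ.2 (i + 1) (by omega) (by omega) (k (i + 1)) (by omega) le_rfl, Xcoef_succ k (i + 1)]
    push_cast
    ring

theorem mul_eq (hk : IsPolicy N S k) (hβ : IsBeta lam mu N k β) {i : ℕ}
    (hi : 1 ≤ i) (hiN : i ≤ N) {j : ℤ} (hlo : k (i - 1) < j) (hhi : j ≤ k i) :
    i * β j = lam / mu * β (j - 1) := by
  have h0 := hk.sub_le_sub (Nat.zero_le (i - 1)) (by omega)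
  rw [hβ.eq_of_mem_block hk hi hiN hlo.le hhi,
    hβ.eq_of_mem_block hk hi hiN (by omega) (by omega),
    show j - k 0 = j - 1 - k 0 + 1 by ring, show j - k (i - 1) = j - 1 - k (i - 1) + 1 by ring,
    zpow_add' (Or.inr (Or.inl (by omega))), zpow_add_one₀ (by positivity)]
  field_simp

theorem pos (hlam : 0 < lam) (hmu : 0 < mu) (hk : IsPolicy N S k) (hβ : IsBeta lam mu N k β)
    {j : ℤ} (h0 : k 0 ≤ j) (hS : j ≤ S) : 0 < β j := by
  rcases h0.eq_or_lt with rfl | hlt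
  · rw [hβ.1]
    exact one_pos
  obtain ⟨t, ht, htN, hlo, hhi⟩ := hk.exists_block hlt hS
  rw [hβ.2 t ht htN j hlo hhi]
  have := Xcoef_pos k t
  positivity

theorem sum_pos (hlam : 0 < lam) (hmu : 0 < mu) (hk : IsPolicy N S k)
    (hβ : IsBeta lam mu N k β) : 0 < ∑ j ∈ Icc (k 0) S, β j := by
  have := hk.le_khathat (Nat.zero_le N)
  simp only [khathat] at this
  exact Finset.sum_pos (fun j hj => hβ.pos hlam hmu hk (mem_Icc.1 hj).1 (mem_Icc.1 hj).2)
    ⟨k 0, mem_Icc.2 ⟨le_rfl, by omega⟩⟩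

end IsBeta

section Comparison

variable {lam mu : ℝ} {N : ℕ} {S : ℤ} {k : ℕ → ℤ} {β βh : ℤ → ℝ}

theorem IsBeta.ratio_step_khathat (hlam : 0 < lam) (hmu : 0 < mu) (hS : (N : ℤ) ≤ S)
    (hk : IsPolicy N S k) (hβ : IsBeta lam mu N k β) (hβh : IsBeta lam mu N (khathat N S) βh)
    {j : ℤ} (hj0 : khathat N S 0 < j) (hjS : j ≤ S) :
    βh (j - 1) * β j ≤ βh j * β (j - 1) := by
  have hkh := khathat_isPolicy hS
  have hk0 : k 0 < j := (hk.le_khathat (Nat.zero_le N)).trans_lt hj0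
  obtain ⟨s, hs, hsN, hslo, hshi⟩ := hkh.exists_block hj0 hjS
  obtain ⟨t, ht, htN, htlo, hthi⟩ := hk.exists_block hk0 hjS
  -- `k` has at least as many front-room workers at level `j` as `K̂̂`
  have hst : (s : ℝ) ≤ t := by
    have := hk.le_khathat htN
    simp only [khathat] at this hslo hshi
    exact_mod_cast (by omega : s ≤ t)
  have hrec := hβ.mul_eq hk ht htN htlo hthi
  have hrech := hβh.mul_eq hkh hs hsN hslo hshi
  have hβ1 := hβ.pos hlam hmu hk (by omega : k 0 ≤ j - 1) (by omega)
  have hβh1 := hβh.pos hlam hmu hkh (by omega : khathat N S 0 ≤ j - 1) (by omega)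
  have hs0 : (0 : ℝ) < s := by exact_mod_cast hs
  have ht0 : (0 : ℝ) < t := by exact_mod_cast ht
  have hρ := div_pos hlam hmu
  refine le_of_mul_le_mul_left ?_ (mul_pos hs0 ht0)
  calc s * t * (βh (j - 1) * β j) = s * (lam / mu * βh (j - 1) * β (j - 1)) := by
        linear_combination s * βh (j - 1) * hrec
    _ ≤ t * (lam / mu * βh (j - 1) * β (j - 1)) := by gcongr
    _ = s * t * (βh j * β (j - 1)) := by linear_combination (-t) * β (j - 1) * hrech

theorem IsBeta.mul_le_mul_khathat (hlam : 0 < lam) (hmu : 0 < mu) (hS : (N : ℤ) ≤ S)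
    (hk : IsPolicy N S k) (hβ : IsBeta lam mu N k β) (hβh : IsBeta lam mu N (khathat N S) βh)
    {m m' : ℤ} (hm : khathat N S 0 ≤ m) (hmm' : m ≤ m') (hm' : m' ≤ S) :
    βh m * β m' ≤ βh m' * β m := by
  have hk0 := hk.le_khathat (Nat.zero_le N)
  refine mul_le_mul_of_ratio_step hmm' (fun j hj => ?_) (fun j hj => ?_)
  · rw [mem_Icc] at hj
    exact hβ.pos hlam hmu hk (by omega) (by omega)
  · rw [mem_Ioc] at hj
    exact hβ.ratio_step_khathat hlam hmu hS hk hβh (by omega) (by omega)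

theorem sum_mul_Pfun_le_khathat (hlam : 0 < lam) (hmu : 0 < mu) (hS : (N : ℤ) ≤ S)
    (hk : IsPolicy N S k) (hβ : IsBeta lam mu N k β) (hβh : IsBeta lam mu N (khathat N S) βh)
    {φ : ℤ → ℝ} (hφ : Monotone φ) :
    ∑ j ∈ Icc (k 0) S, φ j * Pfun S k β j
      ≤ ∑ j ∈ Icc (khathat N S 0) S, φ j * Pfun S (khathat N S) βh j := by
  have hkh := khathat_isPolicy hS
  have hk0 := hk.le_khathat (Nat.zero_le N)
  have hsub : Icc (khathat N S 0) S ⊆ Icc (k 0) S := Icc_subset_Icc_left hk0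
  -- `βh` extended by zero to the state space of `k`
  set g := (↑(Icc (khathat N S 0) S) : Set ℤ).indicator βh
  have hsum_g (ψ : ℤ → ℝ) :
      ∑ j ∈ Icc (k 0) S, ψ j * g j = ∑ j ∈ Icc (khathat N S 0) S, ψ j * βh j := by
    simp only [g, ← Set.indicator_mul_right]
    exact sum_indicator_subset _ hsub
  have hg_nonneg (j : ℤ) : 0 ≤ g j :=
    Set.indicator_nonneg (fun j hj => (hβh.pos hlam hmu hkh (mem_Icc.1 hj).1 (mem_Icc.1 hj).2).le) j
  simp only [Pfun, mul_div_assoc', ← sum_div]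
  rw [div_le_div_iff₀ (hβ.sum_pos hlam hmu hk) (hβh.sum_pos hlam hmu hkh), ← hsum_g,
    ← sum_indicator_subset βh hsub]
  refine sum_mul_sum_le_of_ratio_le _ (hφ.monotoneOn _) fun m hm m' hm' hlt => ?_
  rw [mem_Icc] at hm hm'
  by_cases hmh : khathat N S 0 ≤ m
  · simp only [Set.indicator_of_mem (mem_coe.2 (mem_Icc.2 ⟨hmh, hm.2⟩)),
      Set.indicator_of_mem (mem_coe.2 (mem_Icc.2 ⟨hmh.trans hlt.le, hm'.2⟩))]
    rw [mul_comm (β m)]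
    exact hβ.mul_le_mul_khathat hlam hmu hS hk hβh hmh hlt.le hm'.2
  · rw [Set.indicator_of_notMem (by simp [hmh]), zero_mul]
    exact mul_nonneg (hβ.pos hlam hmu hk hm.1 hm.2).le (hg_nonneg m')

theorem Lval_le_khathat (hlam : 0 < lam) (hmu : 0 < mu) (hS : (N : ℤ) ≤ S)
    (hk : IsPolicy N S k) (hβ : IsBeta lam mu N k β) (hβh : IsBeta lam mu N (khathat N S) βh) :
    Lval S k β ≤ Lval S (khathat N S) βh :=
  sum_mul_Pfun_le_khathat hlam hmu hS hk hβ hβh Int.cast_mono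

theorem Pfun_top_le_khathat (hlam : 0 < lam) (hmu : 0 < mu) (hS : (N : ℤ) ≤ S)
    (hk : IsPolicy N S k) (hβ : IsBeta lam mu N k β) (hβh : IsBeta lam mu N (khathat N S) βh) :
    Pfun S k β S ≤ Pfun S (khathat N S) βh S := by
  have hmono : Monotone fun j : ℤ => if S ≤ j then (1 : ℝ) else 0 := by
    intro x y hxy
    dsimp only
    split_ifs <;> norm_num
    omega
  have key := sum_mul_Pfun_le_khathat hlam hmu hS hk hβ hβh hmono
  have hk0 := hk.le_khathat (Nat.zero_le N)
  simp only [khathat] at hk0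
  rwa [sum_Icc_ite_top_mul _ (by omega), sum_Icc_ite_top_mul _ (by simp [khathat])] at key

end Comparison

section Stationary

variable {lam mu : ℝ} {N : ℕ} {S : ℤ} {k : ℕ → ℤ} {β : ℤ → ℝ}

theorem sum_Pfun (hT : ∑ m ∈ Icc (k 0) S, β m ≠ 0) : ∑ j ∈ Icc (k 0) S, Pfun S k β j = 1 := by
  simp only [Pfun, ← sum_div, div_self hT]

theorem IsBeta.Fval_eq (hlam : 0 < lam) (hmu : 0 < mu) (hk : IsPolicy N S k)
    (hβ : IsBeta lam mu N k β) : Fval N S k β = lam / mu * (1 - Pfun S k β S) := by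
  have hk0S := hk.sub_le_sub (Nat.zero_le N) le_rfl
  rw [hk.2.2] at hk0S
  calc Fval N S k β = ∑ j ∈ Ioc (k 0) S, lam / mu * Pfun S k β (j - 1) := by
        rw [Fval, ← hk.sum_blocks]
        refine sum_congr rfl fun i hi => sum_congr rfl fun j hj => ?_
        rw [mem_Icc] at hi hj
        simp only [Pfun, mul_div_assoc', ← hβ.mul_eq hk hi.1 hi.2 (by omega) hj.2]
    _ = lam / mu * (∑ j ∈ Icc (k 0) S, Pfun S k β j - Pfun S k β S) := by
        rw [← mul_sum, sum_Ioc_sub_one, ← sum_Ico_add_eq_sum_Icc (by omega), add_sub_cancel_right]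
    _ = lam / mu * (1 - Pfun S k β S) := by rw [sum_Pfun (hβ.sum_pos hlam hmu hk).ne']

theorem IsBeta.Pfun_top_lt_one (hlam : 0 < lam) (hmu : 0 < mu) (hN : 1 ≤ N)
    (hk : IsPolicy N S k) (hβ : IsBeta lam mu N k β) : Pfun S k β S < 1 := by
  have hk0S := hk.sub_le_sub (Nat.zero_le N) le_rfl
  rw [hk.2.2] at hk0S
  rw [Pfun, div_lt_one (hβ.sum_pos hlam hmu hk)]
  exact single_lt_sum (j := k 0) (by omega) (mem_Icc.2 ⟨by omega, le_rfl⟩)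
    (mem_Icc.2 ⟨le_rfl, by omega⟩) (by rw [hβ.1]; exact one_pos)
    fun j hj _ => (hβ.pos hlam hmu hk (mem_Icc.1 hj).1 (mem_Icc.1 hj).2).le

theorem IsBeta.Lval_nonneg (hlam : 0 < lam) (hmu : 0 < mu) (hk : IsPolicy N S k)
    (hβ : IsBeta lam mu N k β) : 0 ≤ Lval S k β := by
  refine sum_nonneg fun j hj => ?_
  rw [mem_Icc] at hj
  have hj0 : (0 : ℝ) ≤ j := by exact_mod_cast hk.1.trans hj.1
  have := hβ.pos hlam hmu hk hj.1 hj.2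
  have := hβ.sum_pos hlam hmu hk
  unfold Pfun
  positivity

end Stationary

/-- `K̂̂` yields the largest expected waiting time and back-room staffing and
the smallest front-room staffing over all policies; in particular if
`B(K̂̂) < B_l` then no policy satisfies `B(K) ≥ B_l`. -/
theorem khathat_extremal
    (lam mu : ℝ) (hlam : 0 < lam) (hmu : 0 < mu)
    (N : ℕ) (hN : 1 ≤ N) (S : ℤ) (hS : (N : ℤ) ≤ S)
    (βh : ℤ → ℝ) (hβh : IsBeta lam mu N (khathat N S) βh) (Bl : ℝ) :
    (∀ (k : ℕ → ℤ) (β : ℤ → ℝ), IsPolicy N S k → IsBeta lam mu N k β →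
      Wq lam mu S k β ≤ Wq lam mu S (khathat N S) βh ∧
      Fval N S (khathat N S) βh ≤ Fval N S k β ∧
      Bval N S k β ≤ Bval N S (khathat N S) βh) ∧
    (Bval N S (khathat N S) βh < Bl →
      ∀ (k : ℕ → ℤ) (β : ℤ → ℝ), IsPolicy N S k → IsBeta lam mu N k β →
        ¬ (Bl ≤ Bval N S k β)) := by
  have hkh := khathat_isPolicy hS
  have main : ∀ (k : ℕ → ℤ) (β : ℤ → ℝ), IsPolicy N S k → IsBeta lam mu N k β →
      Wq lam mu S k β ≤ Wq lam mu S (khathat N S) βh ∧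
      Fval N S (khathat N S) βh ≤ Fval N S k β ∧
      Bval N S k β ≤ Bval N S (khathat N S) βh := by
    intro k β hk hβ
    have hP := Pfun_top_le_khathat hlam hmu hS hk hβ hβh
    have hF : Fval N S (khathat N S) βh ≤ Fval N S k β := by
      rw [hβh.Fval_eq hlam hmu hkh, hβ.Fval_eq hlam hmu hk]
      gcongr
    have hL := Lval_le_khathat hlam hmu hS hk hβ hβh
    have hL0 := hβ.Lval_nonneg hlam hmu hk
    have hd := sub_pos.2 (hβh.Pfun_top_lt_one hlam hmu hN hkh)
    refine ⟨sub_le_sub_right (div_le_div₀ (hL0.trans hL) hL (mul_pos hlam hd) ?_) _, hF,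
      sub_le_sub_left hF _⟩
    gcongr
  exact ⟨main, fun hB k β hk hβ hle => absurd (main k β hk hβ).2.2 (by linarith)⟩
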